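/- There exists a constant C_d > 0, depending only on d, such that for every probability measure μ on {0,1}^{ℤ^d} (with the product σ-algebra), every integer L ≥ 1 and every N ≥ 0, μ({ξ : B(L_N − 1) ↔ξ B(2L_N)^c}) ≤ (C_d)^{2^N} · max_{𝒯 ∈ Λ_N} μ(∩_{m ∈ T_(N)} {ξ : B(𝒯(m), L) ↔ξ B(𝒯(m), 2L)^c}). -/
import Mathlib


open MeasureTheory

/-!
STATEMENT 7: There is a constant `C_d > 0` depending only on `d` such that for every
probability measure `μ` on `{0,1}^(ℤ^d)` (product σ-algebra), every `L ≥ 1` and every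
`N ≥ 0`,
`μ(B(L_N − 1) ↔ξ B(2·L_N)^c) ≤ C_d^(2^N) · max_{𝒯 ∈ Λ_N} μ(∩_{m ∈ T_(N)} {B(𝒯(m), L) ↔ξ B(𝒯(m), 2L)^c})`,
where `L_N = 6^N·L`.

Configurations are modelled as `(Fin d → ℤ) → Bool` (`true` = `1` = open). The maximum
over the (finite, nonempty) set `Λ_N` of proper embeddings is expressed as a supremum
`⨆` in `ℝ≥0∞` over the subtype of proper embeddings.
-/

/-- The `ℓ∞` norm of a point of `ℤ^d`, as a natural number. -/
def normInf {d : ℕ} (x : Fin d → ℤ) : ℕ := Finset.univ.sup fun i => (x i).natAbs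

/-- The `ℓ¹` norm of a point of `ℤ^d`, as a natural number. -/
def norm1 {d : ℕ} (x : Fin d → ℤ) : ℕ := ∑ i, (x i).natAbs

/-- The `ℓ∞`-ball `B(x, r)` in `ℤ^d`. -/
def box {d : ℕ} (x : Fin d → ℤ) (r : ℕ) : Set (Fin d → ℤ) := {y | normInf (y - x) ≤ r}

/-- Proper embedding of the binary tree `T_N` of height `N` (scale parameter `L`). -/
def IsProperEmbedding (d L N : ℕ) (T : List Bool → (Fin d → ℤ)) : Prop :=
  T [] = 0 ∧
  (∀ m : List Bool, m.length ≤ N → ∀ i : Fin d,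
      ((6 ^ (N - m.length) * L : ℕ) : ℤ) ∣ T m i) ∧
  ∀ m : List Bool, m.length < N →
    normInf (T (m ++ [false]) - T m) = 6 ^ (N - m.length) * L ∧
    normInf (T (m ++ [true]) - T m) = 2 * (6 ^ (N - m.length) * L)

/-- The event `A ↔ξ B`: there is a nearest-neighbor path `γ(0), …, γ(n)` (consecutive
points at `ℓ¹`-distance 1) of open sites (`ξ = true`), with `γ(0)` a nearest neighbor
of a point of `A` and `γ(n)` a nearest neighbor of a point of `B`. -/
def connEvent (d : ℕ) (A B : Set (Fin d → ℤ)) : Set ((Fin d → ℤ) → Bool) :=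
  {ξ | ∃ (n : ℕ) (γ : ℕ → (Fin d → ℤ)),
    (∀ i < n, norm1 (γ (i + 1) - γ i) = 1) ∧
    (∀ i ≤ n, ξ (γ i) = true) ∧
    (∃ a ∈ A, norm1 (γ 0 - a) = 1) ∧
    (∃ b ∈ B, norm1 (γ n - b) = 1)}

lemma coord_le_normInf {d : ℕ} (x : Fin d → ℤ) (i : Fin d) : (x i).natAbs ≤ normInf x :=
  Finset.le_sup (f := fun i => (x i).natAbs) (Finset.mem_univ i)
lemma normInf_le {d : ℕ} {x : Fin d → ℤ} {r : ℕ} (h : ∀ i, (x i).natAbs ≤ r) : normInf x ≤ r :=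
  Finset.sup_le fun i _ => h i
lemma normInf_le_norm1 {d : ℕ} (x : Fin d → ℤ) : normInf x ≤ norm1 x :=
  normInf_le fun i => Finset.single_le_sum (f := fun j => (x j).natAbs)
    (fun _ _ => Nat.zero_le _) (Finset.mem_univ i)
lemma norm1_neg {d : ℕ} (x : Fin d → ℤ) : norm1 (-x) = norm1 x := by
  unfold norm1; simp
lemma norm1_sub_comm {d : ℕ} (x y : Fin d → ℤ) : norm1 (x - y) = norm1 (y - x) := by
  rw [← norm1_neg (x - y)]; ring_nf
lemma normInf_add_le {d : ℕ} (x y : Fin d → ℤ) : normInf (x + y) ≤ normInf x + normInf y := by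
  refine normInf_le fun i => ?_
  calc ((x + y) i).natAbs = (x i + y i).natAbs := rfl
    _ ≤ (x i).natAbs + (y i).natAbs := Int.natAbs_add_le _ _
    _ ≤ normInf x + normInf y := Nat.add_le_add (coord_le_normInf x i) (coord_le_normInf y i)
lemma normInf_tri {d : ℕ} (a b c : Fin d → ℤ) :
    normInf (a - c) ≤ normInf (a - b) + normInf (b - c) := by
  have : a - c = (a - b) + (b - c) := by ring
  rw [this]; exact normInf_add_le _ _
lemma connEvent_mono {d : ℕ} {A A' B B' : Set (Fin d → ℤ)} (hA : A ⊆ A') (hB : B ⊆ B') :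
    connEvent d A B ⊆ connEvent d A' B' := by
  rintro ξ ⟨n, γ, hs, ho, ⟨a, ha, ha1⟩, ⟨b, hb, hb1⟩⟩
  exact ⟨n, γ, hs, ho, ⟨a, hA ha, ha1⟩, ⟨b, hB hb, hb1⟩⟩
lemma box_mono {d : ℕ} (x : Fin d → ℤ) {r r' : ℕ} (h : r ≤ r') : box x r ⊆ box x r' :=
  fun y hy => le_trans hy h
lemma first_hit (f : ℕ → ℕ) (n c : ℕ) (hlip : ∀ i < n, f (i + 1) ≤ f i + 1)
    (h0 : f 0 ≤ c) (hn : c ≤ f n) : ∃ i ≤ n, f i = c ∧ ∀ k < i, f k < c := by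
  have hex : ∃ i, c ≤ f i := ⟨n, hn⟩
  set i := Nat.find hex with hi
  have hfi : c ≤ f i := Nat.find_spec hex
  have hmin : ∀ k < i, f k < c := fun k hk => Nat.lt_of_not_le (Nat.find_min hex hk)
  have hin : i ≤ n := Nat.find_min' hex hn
  refine ⟨i, hin, ?_, hmin⟩
  rcases Nat.eq_zero_or_pos i with h | h
  · rw [h] at hfi ⊢; omega
  · have h1 : f (i - 1) < c := hmin _ (by omega)
    have h2 : f ((i - 1) + 1) ≤ f (i - 1) + 1 := hlip _ (by omega)
    have h3 : (i - 1) + 1 = i := by omega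
    rw [h3] at h2; omega
lemma normInf_lip {d : ℕ} {n : ℕ} {γ : ℕ → Fin d → ℤ}
    (hstep : ∀ i < n, norm1 (γ (i + 1) - γ i) = 1) (z : Fin d → ℤ) :
    ∀ i < n, normInf (γ (i + 1) - z) ≤ normInf (γ i - z) + 1 := by
  intro i hi
  calc normInf (γ (i + 1) - z) ≤ normInf (γ (i + 1) - γ i) + normInf (γ i - z) := normInf_tri _ _ _
    _ ≤ 1 + normInf (γ i - z) := by
        have := le_trans (normInf_le_norm1 (γ (i+1) - γ i)) (le_of_eq (hstep i hi))
        omega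
    _ = normInf (γ i - z) + 1 := by omega
lemma subcross {d : ℕ} (ξ : (Fin d → ℤ) → Bool) (n : ℕ) (γ : ℕ → Fin d → ℤ)
    (hstep : ∀ i < n, norm1 (γ (i + 1) - γ i) = 1)
    (hopen : ∀ i ≤ n, ξ (γ i) = true)
    (z : Fin d → ℤ) (r : ℕ) (hr : 1 ≤ r)
    (i0 i2 : ℕ) (h02 : i0 ≤ i2) (h2n : i2 ≤ n)
    (hin : normInf (γ i0 - z) ≤ r - 1)
    (hout : 2 * r + 1 ≤ normInf (γ i2 - z)) :
    ξ ∈ connEvent d (box z (r - 1)) (box z (2 * r))ᶜ := by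
  have hex : ∃ t, 2 * r + 1 ≤ normInf (γ (i0 + t) - z) := ⟨i2 - i0, by rwa [Nat.add_sub_cancel' h02]⟩
  set t := Nat.find hex with ht
  set i1 := i0 + t with hi1
  have ht2 : t ≤ i2 - i0 := Nat.find_min' hex (by rwa [Nat.add_sub_cancel' h02])
  have h1n : i1 ≤ n := by omega
  have hfi1 : 2 * r + 1 ≤ normInf (γ i1 - z) := Nat.find_spec hex
  have hmin : ∀ k, i0 ≤ k → k < i1 → normInf (γ k - z) ≤ 2 * r := by
    intro k hk hk'
    have := Nat.find_min hex (m := k - i0) (by omega)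
    have hkk : i0 + (k - i0) = k := by omega
    rw [hkk] at this; omega
  -- i1 ≥ i0 + 2
  have h12 : i0 + 2 ≤ i1 := by
    rcases Nat.lt_or_ge i1 (i0 + 2) with h | h
    · exfalso
      rcases Nat.lt_or_ge i1 (i0 + 1) with h' | h'
      · have : i1 = i0 := by omega
        rw [this] at hfi1; omega
      · have : i1 = i0 + 1 := by omega
        have hl := normInf_lip hstep z i0 (by omega)
        rw [← this] at hl; omega
    · exact h
  -- the subpath
  refine ⟨i1 - i0 - 2, fun k => γ (i0 + 1 + k), ?_, ?_, ?_, ?_⟩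
  · intro i hi
    show norm1 (γ (i0 + 1 + (i + 1)) - γ (i0 + 1 + i)) = 1
    have h : i0 + 1 + (i + 1) = (i0 + 1 + i) + 1 := by omega
    rw [h]
    exact hstep _ (by omega)
  · intro i hi
    exact hopen _ (by omega)
  · refine ⟨γ i0, hin, ?_⟩
    show norm1 (γ (i0 + 1 + 0) - γ i0) = 1
    have h : i0 + 1 + 0 = i0 + 1 := by omega
    rw [h]
    exact hstep i0 (by omega)
  · refine ⟨γ i1, ?_, ?_⟩
    · intro hmem
      exact absurd hmem (by simp only [box, Set.mem_setOf_eq]; omega)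
    · show norm1 (γ (i0 + 1 + (i1 - i0 - 2)) - γ i1) = 1
      have he : i0 + 1 + (i1 - i0 - 2) = i1 - 1 := by omega
      rw [he, norm1_sub_comm]
      have : i1 = (i1 - 1) + 1 := by omega
      rw [this]
      exact hstep _ (by omega)
lemma subcross' {d : ℕ} (ξ : (Fin d → ℤ) → Bool) (n : ℕ) (γ : ℕ → Fin d → ℤ)
    (hstep : ∀ i < n, norm1 (γ (i + 1) - γ i) = 1)
    (hopen : ∀ i ≤ n, ξ (γ i) = true)
    (z : Fin d → ℤ) (r : ℕ) (hr : 1 ≤ r)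
    (i0 i2 : ℕ) (h02 : i2 ≤ i0) (h2n : i0 ≤ n)
    (hin : normInf (γ i0 - z) ≤ r - 1)
    (hout : 2 * r + 1 ≤ normInf (γ i2 - z)) :
    ξ ∈ connEvent d (box z (r - 1)) (box z (2 * r))ᶜ := by
  have := subcross ξ i0 (fun k => γ (i0 - k)) ?_ ?_ z r hr 0 (i0 - i2) (by omega) (by omega) ?_ ?_
  · exact this
  · intro i hi
    show norm1 (γ (i0 - (i + 1)) - γ (i0 - i)) = 1
    have h1 : i0 - (i + 1) + 1 = i0 - i := by omega
    rw [← h1, norm1_sub_comm, h1]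
    have : i0 - i = (i0 - (i + 1)) + 1 := by omega
    rw [this]
    exact hstep _ (by omega)
  · intro i _
    exact hopen _ (by omega)
  · simpa using hin
  · show 2 * r + 1 ≤ normInf (γ (i0 - (i0 - i2)) - z)
    have h : i0 - (i0 - i2) = i2 := by omega
    rwa [h]
lemma normInf_sub_comm {d : ℕ} (x y : Fin d → ℤ) : normInf (x - y) = normInf (y - x) := by
  unfold normInf
  congr 1; funext i
  have h : (x - y) i = -((y - x) i) := by simp
  rw [h, Int.natAbs_neg]
def rd (c : ℤ) (s : ℕ) : ℤ := c.sign * ((s : ℤ) * ((c.natAbs / s : ℕ) : ℤ))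
lemma rd_dvd (c : ℤ) (s : ℕ) : (s : ℤ) ∣ rd c s := ⟨c.sign * ((c.natAbs / s : ℕ) : ℤ), by unfold rd; ring⟩
lemma rd_natAbs_le (c : ℤ) (s : ℕ) : (rd c s).natAbs ≤ c.natAbs := by
  unfold rd
  rw [Int.natAbs_mul, Int.natAbs_mul, Int.natAbs_natCast, Int.natAbs_natCast]
  have h1 : c.sign.natAbs ≤ 1 := by
    rw [Int.natAbs_sign]; split <;> omega
  have h2 : s * (c.natAbs / s) ≤ c.natAbs := Nat.mul_div_le _ _
  calc c.sign.natAbs * (s * (c.natAbs / s)) ≤ 1 * (s * (c.natAbs / s)) :=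
        Nat.mul_le_mul_right _ h1
    _ = s * (c.natAbs / s) := one_mul _
    _ ≤ c.natAbs := h2
lemma rd_sub_abs (c : ℤ) {s : ℕ} (hs : 1 ≤ s) : (c - rd c s).natAbs ≤ s - 1 := by
  have h2 : c - rd c s = c.sign * ((c.natAbs : ℤ) - (s : ℤ) * ((c.natAbs / s : ℕ) : ℤ)) := by
    unfold rd
    nth_rewrite 1 [← Int.sign_mul_natAbs c]
    ring
  rw [h2, Int.natAbs_mul]
  have h3 : ((c.natAbs : ℤ) - (s : ℤ) * ((c.natAbs / s : ℕ) : ℤ)) = ((c.natAbs % s : ℕ) : ℤ) := by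
    have h := Nat.mod_add_div c.natAbs s
    omega
  rw [h3, Int.natAbs_natCast]
  have h4 : c.natAbs % s < s := Nat.mod_lt _ (by omega)
  have h1 : c.sign.natAbs ≤ 1 := by rw [Int.natAbs_sign]; split <;> omega
  calc c.sign.natAbs * (c.natAbs % s) ≤ 1 * (c.natAbs % s) := Nat.mul_le_mul_right _ h1
    _ = c.natAbs % s := one_mul _
    _ ≤ s - 1 := by omega
lemma rd_exact {c : ℤ} {s : ℕ} (h : s ∣ c.natAbs) : (rd c s).natAbs = c.natAbs := by
  unfold rd
  rw [Int.natAbs_mul, Int.natAbs_mul, Int.natAbs_natCast, Int.natAbs_natCast,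
    Nat.mul_div_cancel' h, Int.natAbs_sign]
  by_cases hc : c = 0
  · simp [hc]
  · simp [hc]
lemma round_pt {d : ℕ} (hd : 1 ≤ d) (y x : Fin d → ℤ) (s k : ℕ) (hs : 1 ≤ s)
    (hy : normInf (y - x) = s * k) :
    ∃ z : Fin d → ℤ, (∀ i, (s : ℤ) ∣ (z i - x i)) ∧ normInf (y - z) ≤ s - 1 ∧
      normInf (z - x) = s * k := by
  refine ⟨fun i => x i + rd (y i - x i) s, fun i => by simpa using rd_dvd _ s, ?_, ?_⟩
  · refine normInf_le fun i => ?_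
    have : (y - fun i => x i + rd (y i - x i) s) i = (y i - x i) - rd (y i - x i) s := by
      simp; ring
    rw [this]
    exact rd_sub_abs _ hs
  · have hco : ∀ i, ((fun i => x i + rd (y i - x i) s) - x) i = rd (y i - x i) s := by
      intro i; simp
    refine le_antisymm (normInf_le fun i => ?_) ?_
    · rw [hco i]
      calc (rd (y i - x i) s).natAbs ≤ ((y - x) i).natAbs := rd_natAbs_le _ _
        _ ≤ normInf (y - x) := coord_le_normInf _ i
        _ = s * k := hy
    · -- some coordinate attains the sup
      have hne : (Finset.univ : Finset (Fin d)).Nonempty := by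
        refine Finset.univ_nonempty_iff.mpr ?_
        exact Fin.pos_iff_nonempty.mp (by omega)
      obtain ⟨i, _, hi⟩ := Finset.exists_mem_eq_sup Finset.univ hne
        (fun i => ((y - x) i).natAbs)
      have hiv : ((y - x) i).natAbs = s * k := by
        rw [← hy]; exact hi.symm
      have hdvd : s ∣ ((y - x) i).natAbs := by rw [hiv]; exact ⟨k, rfl⟩
      have : (rd (y i - x i) s).natAbs = s * k := by
        have h := rd_exact hdvd
        exact h.trans hiv
      calc s * k = (((fun i => x i + rd (y i - x i) s) - x) i).natAbs := by rw [hco i]; omega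
        _ ≤ normInf ((fun i => x i + rd (y i - x i) s) - x) := coord_le_normInf _ i
lemma tree_extract {d L : ℕ} (hd : 1 ≤ d) (hL : 1 ≤ L) (ξ : (Fin d → ℤ) → Bool) :
    ∀ (j : ℕ) (x : Fin d → ℤ), (∀ i, ((6 ^ j * L : ℕ) : ℤ) ∣ x i) →
    ξ ∈ connEvent d (box x (6 ^ j * L - 1)) (box x (2 * (6 ^ j * L)))ᶜ →
    ∃ T : List Bool → (Fin d → ℤ),
      T [] = x ∧
      (∀ m : List Bool, m.length ≤ j → ∀ i, ((6 ^ (j - m.length) * L : ℕ) : ℤ) ∣ T m i) ∧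
      (∀ m : List Bool, m.length < j →
        normInf (T (m ++ [false]) - T m) = 6 ^ (j - m.length) * L ∧
        normInf (T (m ++ [true]) - T m) = 2 * (6 ^ (j - m.length) * L)) ∧
      (∀ m : List Bool, m.length = j → ξ ∈ connEvent d (box (T m) L) (box (T m) (2 * L))ᶜ) := by
  intro j
  induction j with
  | zero =>
    intro x hdvd hξ
    refine ⟨fun _ => x, rfl, ?_, ?_, ?_⟩
    · intro m hm i
      have hm0 : m.length = 0 := by omega
      simpa [hm0] using hdvd i
    · intro m hm; omega
    · intro m _
      have h1 : (6 : ℕ) ^ 0 * L = L := by norm_num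
      rw [h1] at hξ
      exact connEvent_mono (box_mono x (by omega)) (subset_refl _) hξ
  | succ j IH =>
    intro x hdvd hξ
    obtain ⟨n, γ, hstep, hopen, ⟨a, ha, ha1⟩, ⟨b, hb, hb1⟩⟩ := hξ
    have hℓ'1 : 1 ≤ 6 ^ j * L := Nat.one_le_iff_ne_zero.mpr (by positivity)
    have hpow : 6 ^ (j + 1) * L = (6 ^ j * L) * 6 := by ring
    -- distance function bounds
    have hlip := normInf_lip hstep x
    have h0 : normInf (γ 0 - x) ≤ (6 ^ j * L) * 6 := by
      have t1 : normInf (γ 0 - x) ≤ normInf (γ 0 - a) + normInf (a - x) := normInf_tri _ _ _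
      have t2 : normInf (γ 0 - a) ≤ 1 := le_trans (normInf_le_norm1 _) (le_of_eq ha1)
      have t3 : normInf (a - x) ≤ 6 ^ (j + 1) * L - 1 := ha
      omega
    have hn : 2 * ((6 ^ j * L) * 6) ≤ normInf (γ n - x) := by
      have t1 : ¬ normInf (b - x) ≤ 2 * (6 ^ (j + 1) * L) := hb
      have t2 : normInf (b - x) ≤ normInf (b - γ n) + normInf (γ n - x) := normInf_tri _ _ _
      have t3 : normInf (b - γ n) ≤ 1 := by
        rw [normInf_sub_comm]
        exact le_trans (normInf_le_norm1 _) (le_of_eq hb1)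
      omega
    -- first hitting times of the spheres of radii ℓ and 2ℓ
    obtain ⟨i0, hi0n, hfi0, -⟩ := first_hit (fun i => normInf (γ i - x)) n ((6 ^ j * L) * 6)
      hlip h0 (by exact (by omega : (6 ^ j * L) * 6 ≤ normInf (γ n - x)))
    obtain ⟨i0', hi0'n, hfi0', -⟩ := first_hit (fun i => normInf (γ i - x)) n
      ((6 ^ j * L) * 12) hlip (by exact (by omega : normInf (γ 0 - x) ≤ (6 ^ j * L) * 12))
      (by exact (by omega : (6 ^ j * L) * 12 ≤ normInf (γ n - x)))
    -- rounded centers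
    obtain ⟨z1, hz1dvd, hz1near, hz1dist⟩ := round_pt hd (γ i0) x (6 ^ j * L) 6 hℓ'1 hfi0
    obtain ⟨z2, hz2dvd, hz2near, hz2dist⟩ := round_pt hd (γ i0') x (6 ^ j * L) 12 hℓ'1 hfi0'
    -- crossing around z1 (exits through the end of the path)
    have hcross1 : ξ ∈ connEvent d (box z1 (6 ^ j * L - 1)) (box z1 (2 * (6 ^ j * L)))ᶜ := by
      refine subcross ξ n γ hstep hopen z1 (6 ^ j * L) hℓ'1 i0 n hi0n le_rfl ?_ ?_
      · exact le_trans hz1near (le_of_eq rfl)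
      · have t1 : normInf (γ n - x) ≤ normInf (γ n - z1) + normInf (z1 - x) := normInf_tri _ _ _
        have t2 : normInf (z1 - x) = (6 ^ j * L) * 6 := by
          rw [normInf_sub_comm]
          have : z1 - x = (fun i => z1 i - x i) := rfl
          rw [normInf_sub_comm] at hz1dist
          omega
        omega
    -- crossing around z2 (exits through the beginning of the path)
    have hcross2 : ξ ∈ connEvent d (box z2 (6 ^ j * L - 1)) (box z2 (2 * (6 ^ j * L)))ᶜ := by
      refine subcross' ξ n γ hstep hopen z2 (6 ^ j * L) hℓ'1 i0' 0 (Nat.zero_le _) hi0'n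
        hz2near ?_
      have t1 : normInf (z2 - x) ≤ normInf (z2 - γ 0) + normInf (γ 0 - x) := normInf_tri _ _ _
      have t2 : normInf (z2 - γ 0) = normInf (γ 0 - z2) := normInf_sub_comm _ _
      omega
    -- divisibility of the new centers
    have hdvd6 : ((6 ^ j * L : ℕ) : ℤ) ∣ ((6 ^ (j + 1) * L : ℕ) : ℤ) := by
      exact_mod_cast Int.natCast_dvd_natCast.mpr ⟨6, by ring⟩
    have hz1dvd' : ∀ i, ((6 ^ j * L : ℕ) : ℤ) ∣ z1 i := by
      intro i
      have : z1 i = (z1 i - x i) + x i := by ring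
      rw [this]
      exact dvd_add (hz1dvd i) (dvd_trans hdvd6 (hdvd i))
    have hz2dvd' : ∀ i, ((6 ^ j * L : ℕ) : ℤ) ∣ z2 i := by
      intro i
      have : z2 i = (z2 i - x i) + x i := by ring
      rw [this]
      exact dvd_add (hz2dvd i) (dvd_trans hdvd6 (hdvd i))
    obtain ⟨T1, hT1root, hT1dvd, hT1child, hT1leaf⟩ := IH z1 hz1dvd' hcross1
    obtain ⟨T2, hT2root, hT2dvd, hT2child, hT2leaf⟩ := IH z2 hz2dvd' hcross2
    -- assemble the tree
    refine ⟨fun m => match m with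
      | [] => x
      | false :: m' => T1 m'
      | true :: m' => T2 m', rfl, ?_, ?_, ?_⟩
    · intro m hm i
      match m with
      | [] => simpa using hdvd i
      | false :: m' =>
        have hl : (false :: m').length = m'.length + 1 := rfl
        have harith : j + 1 - (false :: m').length = j - m'.length := by rw [hl]; omega
        rw [harith]
        exact hT1dvd m' (by rw [hl] at hm; omega) i
      | true :: m' =>
        have hl : (true :: m').length = m'.length + 1 := rfl
        have harith : j + 1 - (true :: m').length = j - m'.length := by rw [hl]; omega
        rw [harith]
        exact hT2dvd m' (by rw [hl] at hm; omega) i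
    · intro m hm
      match m with
      | [] =>
        constructor
        · show normInf (T1 [] - x) = 6 ^ (j + 1 - 0) * L
          rw [hT1root]
          have : j + 1 - 0 = j + 1 := rfl
          rw [this, hpow]
          exact hz1dist
        · show normInf (T2 [] - x) = 2 * (6 ^ (j + 1 - 0) * L)
          rw [hT2root]
          have : j + 1 - 0 = j + 1 := rfl
          rw [this, hpow]
          have : (6 ^ j * L) * 12 = 2 * ((6 ^ j * L) * 6) := by ring
          rw [← this]
          exact hz2dist
      | false :: m' =>
        have hl : (false :: m').length = m'.length + 1 := rfl
        have hm' : m'.length < j := by rw [hl] at hm; omega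
        have harith : j + 1 - (false :: m').length = j - m'.length := by rw [hl]; omega
        rw [harith]
        exact hT1child m' hm'
      | true :: m' =>
        have hl : (true :: m').length = m'.length + 1 := rfl
        have hm' : m'.length < j := by rw [hl] at hm; omega
        have harith : j + 1 - (true :: m').length = j - m'.length := by rw [hl]; omega
        rw [harith]
        exact hT2child m' hm'
    · intro m hm
      match m with
      | [] => simp at hm
      | false :: m' => exact hT1leaf m' (by simpa using hm)
      | true :: m' => exact hT2leaf m' (by simpa using hm)
lemma pad_inj (N : ℕ) :
    Function.Injective (fun (m : {m : List Bool // m.length ≤ N}) (i : Fin (N + 1)) =>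
      (m.1 ++ [true]).getD i false) := by
  have key : ∀ u v : {m : List Bool // m.length ≤ N},
      (fun (i : Fin (N + 1)) => (u.1 ++ [true]).getD i false) =
      (fun (i : Fin (N + 1)) => (v.1 ++ [true]).getD i false) → u.1.length < v.1.length → False := by
    intro u v h hlt
    have hiv : v.1.length < N + 1 := by omega
    have h1 : (v.1 ++ [true]).getD (v.1.length) false = true := by
      rw [List.getD_append_right _ _ _ _ le_rfl]
      simp
    have h2 : (u.1 ++ [true]).getD (v.1.length) false = false := by
      apply List.getD_eq_default
      simp; omega
    have := congrFun h ⟨v.1.length, hiv⟩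
    simp only at this
    rw [h2, h1] at this
    exact Bool.false_ne_true this
  intro u v h
  have hlen : u.1.length = v.1.length := by
    rcases lt_trichotomy u.1.length v.1.length with hl | hl | hl
    · exact absurd (key u v h hl) (fun f => f)
    · exact hl
    · exact absurd (key v u h.symm hl) (fun f => f)
  apply Subtype.ext
  refine List.ext_getElem hlen ?_
  intro n h1 h2
  have hn : n < N + 1 := by omega
  have := congrFun h ⟨n, hn⟩
  simp only at this
  rw [List.getD_append _ _ _ _ (by omega), List.getD_append _ _ _ _ (by omega)] at this
  rwa [List.getD_eq_getElem _ _ h1, List.getD_eq_getElem _ _ h2] at this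
lemma card_lists_le (N : ℕ) : Nat.card {m : List Bool // m.length ≤ N} ≤ 2 ^ (N + 1) := by
  haveI : Finite {m : List Bool // m.length ≤ N} := (List.finite_length_le Bool N).to_subtype
  calc Nat.card {m : List Bool // m.length ≤ N}
      ≤ Nat.card (Fin (N + 1) → Bool) := Nat.card_le_card_of_injective _ (pad_inj N)
    _ = 2 ^ (N + 1) := by simp [Nat.card_fun, Nat.card_eq_fintype_card]
lemma div_bound {a : ℤ} {s : ℕ} (hs : 1 ≤ s) (hdvd : (s : ℤ) ∣ a) (hb : a.natAbs ≤ 12 * s) :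
    a / (s : ℤ) * (s : ℤ) = a ∧ -12 ≤ a / (s : ℤ) ∧ a / (s : ℤ) ≤ 12 := by
  have h1 : a / (s : ℤ) * (s : ℤ) = a := Int.ediv_mul_cancel hdvd
  have habs : |a / (s : ℤ)| ≤ 12 := by
    have h2 : |a / (s : ℤ)| * (s : ℤ) = |a| := by
      calc |a / (s : ℤ)| * (s : ℤ) = |a / (s : ℤ)| * |(s : ℤ)| := by
            rw [abs_of_nonneg (by positivity : (0:ℤ) ≤ (s:ℤ))]
        _ = |a / (s : ℤ) * (s : ℤ)| := (abs_mul _ _).symm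
        _ = |a| := by rw [h1]
    have h3 : |a| ≤ 12 * s := by
      rw [Int.abs_eq_natAbs]
      exact_mod_cast hb
    nlinarith [abs_nonneg (a / (s:ℤ)), (by exact_mod_cast hs : (1:ℤ) ≤ (s:ℤ))]
  exact ⟨h1, abs_le.mp habs⟩
lemma proper_offset {d L N : ℕ} {T : List Bool → Fin d → ℤ}
    (hT : IsProperEmbedding d L N T) (m : List Bool) (b : Bool) (hm : m.length < N) (i : Fin d) :
    ((6 ^ (N - (m ++ [b]).length) * L : ℕ) : ℤ) ∣ (T (m ++ [b]) i - T m i) ∧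
    (T (m ++ [b]) i - T m i).natAbs ≤ 12 * (6 ^ (N - (m ++ [b]).length) * L) := by
  obtain ⟨hroot, hdvd, hchild⟩ := hT
  have hlen : (m ++ [b]).length = m.length + 1 := by simp
  have hstep : (6:ℕ) ^ (N - m.length) * L = 6 * (6 ^ (N - (m ++ [b]).length) * L) := by
    rw [hlen]
    have h : N - m.length = (N - (m.length + 1)) + 1 := by omega
    rw [h]; ring
  constructor
  · refine dvd_sub (hdvd _ (by omega) i) ?_
    have h6 : (6 ^ (N - (m ++ [b]).length) * L : ℕ) ∣ (6 ^ (N - m.length) * L : ℕ) :=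
      ⟨6, by rw [hstep]; ring⟩
    exact dvd_trans (Int.natCast_dvd_natCast.mpr h6) (hdvd m hm.le i)
  · have hco : (T (m ++ [b]) i - T m i).natAbs ≤ normInf (T (m ++ [b]) - T m) :=
      coord_le_normInf (T (m ++ [b]) - T m) i
    cases b
    · have hcc := (hchild m hm).1
      rw [hcc] at hco; omega
    · have hcc := (hchild m hm).2
      rw [hcc] at hco; omega
def emb2off (d L N : ℕ) (T : List Bool → Fin d → ℤ) :
    {m : List Bool // m.length ≤ N} → Fin d → (Finset.Icc (-12 : ℤ) 12) := fun m i =>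
  ⟨max (-12) (min 12 ((T m.1 i - T m.1.dropLast i) / ((6 ^ (N - m.1.length) * L : ℕ) : ℤ))), by
    rw [Finset.mem_Icc]
    exact ⟨le_max_left _ _, max_le (by norm_num) (min_le_left _ _)⟩⟩
lemma emb2off_injOn (d L N : ℕ) (hL : 1 ≤ L) :
    Set.InjOn (emb2off d L N)
      {T | IsProperEmbedding d L N T ∧ ∀ m : List Bool, N < m.length → T m = 0} := by
  intro T hT T' hT' h
  have main : ∀ m : List Bool, m.length ≤ N → T m = T' m := by
    intro m
    induction m using List.reverseRecOn with
    | nil => intro _; rw [hT.1.1, hT'.1.1]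
    | append_singleton m' b ih =>
      intro hlen
      have hlen' : (m' ++ [b]).length = m'.length + 1 := by simp
      have hm' : m'.length < N := by omega
      have hprev : T m' = T' m' := ih (by omega)
      funext i
      have hs1 : 1 ≤ 6 ^ (N - (m' ++ [b]).length) * L :=
        Nat.one_le_iff_ne_zero.mpr (by positivity)
      obtain ⟨hdvd1, hb1⟩ := proper_offset hT.1 m' b hm' i
      obtain ⟨hdvd2, hb2⟩ := proper_offset hT'.1 m' b hm' i
      obtain ⟨heq1, hlo1, hhi1⟩ := div_bound hs1 hdvd1 hb1
      obtain ⟨heq2, hlo2, hhi2⟩ := div_bound hs1 hdvd2 hb2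
      have happ := congrArg Subtype.val
        (congrFun (congrFun h ⟨m' ++ [b], hlen⟩) i)
      simp only [emb2off, List.dropLast_concat] at happ
      rw [min_eq_right hhi1, min_eq_right hhi2, max_eq_right hlo1, max_eq_right hlo2] at happ
      have hfin : T (m' ++ [b]) i - T m' i = T' (m' ++ [b]) i - T' m' i := by
        rw [← heq1, ← heq2, happ]
      have hpi : T m' i = T' m' i := congrFun hprev i
      omega
  funext m
  by_cases hm : m.length ≤ N
  · exact main m hm
  · rw [hT.2 m (by omega), hT'.2 m (by omega)]
theorem crossing_prob_le_renormalized (d : ℕ) (hd : 1 ≤ d) :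
    ∃ C : ℕ, 0 < C ∧
      ∀ (μ : Measure ((Fin d → ℤ) → Bool)), IsProbabilityMeasure μ →
        ∀ L N : ℕ, 1 ≤ L →
          μ (connEvent d (box (0 : Fin d → ℤ) (6 ^ N * L - 1))
              (box (0 : Fin d → ℤ) (2 * (6 ^ N * L)))ᶜ)
            ≤ (C : ENNReal) ^ 2 ^ N *
              ⨆ T : {T : List Bool → (Fin d → ℤ) // IsProperEmbedding d L N T},
                μ (⋂ m ∈ {m : List Bool | m.length = N},
                    connEvent d (box (T.1 m) L) (box (T.1 m) (2 * L))ᶜ) := by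
  refine ⟨25 ^ (2 * d), by positivity, ?_⟩
  intro μ _ L N hL
  haveI : Finite {m : List Bool // m.length ≤ N} := (List.finite_length_le Bool N).to_subtype
  set S : Set (List Bool → (Fin d → ℤ)) :=
    {T | IsProperEmbedding d L N T ∧ ∀ m : List Bool, N < m.length → T m = 0} with hSdef
  -- S is finite with the right cardinality bound
  have hinj := emb2off_injOn d L N hL
  rw [← hSdef] at hinj
  have hSfin : S.Finite := Set.Finite.of_finite_image (Set.toFinite _) hinj
  have hcard1 : S.ncard ≤ Nat.card ({m : List Bool // m.length ≤ N} → Fin d →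
      (Finset.Icc (-12 : ℤ) 12)) := by
    have h := Set.ncard_le_ncard_of_injOn (emb2off d L N)
      (fun a _ => Set.mem_univ _) hinj Set.finite_univ
    simpa [Set.ncard_univ] using h
  have hcard2 : Nat.card ({m : List Bool // m.length ≤ N} → Fin d →
      (Finset.Icc (-12 : ℤ) 12)) = 25 ^ (d * Nat.card {m : List Bool // m.length ≤ N}) := by
    rw [Nat.card_fun, Nat.card_fun]
    have h25 : Nat.card (Finset.Icc (-12 : ℤ) 12) = 25 := by
      rw [Nat.card_eq_fintype_card, Fintype.card_coe, Int.card_Icc]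
      decide
    rw [h25, Nat.card_eq_fintype_card (α := Fin d), Fintype.card_fin, ← pow_mul]
  have hcard3 : S.ncard ≤ (25 ^ (2 * d)) ^ 2 ^ N := by
    have h1 : d * Nat.card {m : List Bool // m.length ≤ N} ≤ d * 2 ^ (N + 1) :=
      Nat.mul_le_mul_left d (card_lists_le N)
    have h2 : (25 : ℕ) ^ (d * Nat.card {m : List Bool // m.length ≤ N}) ≤
        25 ^ (d * 2 ^ (N + 1)) := Nat.pow_le_pow_right (by norm_num) h1
    have h3 : (25 : ℕ) ^ (d * 2 ^ (N + 1)) = (25 ^ (2 * d)) ^ 2 ^ N := by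
      rw [← pow_mul]
      congr 1
      rw [pow_succ]
      ring
    omega
  -- the crossing event is covered by the union over S of the leaf-intersection events
  have hsub : connEvent d (box (0 : Fin d → ℤ) (6 ^ N * L - 1))
      (box (0 : Fin d → ℤ) (2 * (6 ^ N * L)))ᶜ ⊆
      ⋃ T ∈ hSfin.toFinset, ⋂ m ∈ {m : List Bool | m.length = N},
        connEvent d (box (T m) L) (box (T m) (2 * L))ᶜ := by
    intro ξ hξ
    obtain ⟨T, hroot, hdvd, hchild, hleaf⟩ := tree_extract hd hL ξ N 0 (fun i => by simp) hξ
    refine Set.mem_iUnion₂.mpr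
      ⟨fun m : List Bool => if m.length ≤ N then T m else 0, ?_, ?_⟩
    · rw [Set.Finite.mem_toFinset]
      refine ⟨⟨?_, ?_, ?_⟩, ?_⟩
      · simp [hroot]
      · intro m hm i
        have he : (fun m : List Bool => if m.length ≤ N then T m else 0) m = T m := if_pos hm
        rw [he]
        exact hdvd m hm i
      · intro m hm
        have he1 : (fun m : List Bool => if m.length ≤ N then T m else 0) (m ++ [false]) =
            T (m ++ [false]) := if_pos (by simp; omega)
        have he2 : (fun m : List Bool => if m.length ≤ N then T m else 0) (m ++ [true]) =
            T (m ++ [true]) := if_pos (by simp; omega)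
        have he : (fun m : List Bool => if m.length ≤ N then T m else 0) m = T m :=
          if_pos (by omega)
        rw [he1, he2, he]
        exact hchild m hm
      · intro m hm
        exact if_neg (by omega)
    · refine Set.mem_iInter₂.mpr fun m hm => ?_
      have hmN : m.length = N := hm
      have he : (fun m : List Bool => if m.length ≤ N then T m else 0) m = T m :=
        if_pos (by omega)
      rw [he]
      exact hleaf m hmN
  -- measure estimate
  calc μ (connEvent d (box (0 : Fin d → ℤ) (6 ^ N * L - 1))
        (box (0 : Fin d → ℤ) (2 * (6 ^ N * L)))ᶜ)
      ≤ μ (⋃ T ∈ hSfin.toFinset, ⋂ m ∈ {m : List Bool | m.length = N},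
          connEvent d (box (T m) L) (box (T m) (2 * L))ᶜ) := measure_mono hsub
    _ ≤ ∑ T ∈ hSfin.toFinset, μ (⋂ m ∈ {m : List Bool | m.length = N},
          connEvent d (box (T m) L) (box (T m) (2 * L))ᶜ) := measure_biUnion_finset_le _ _
    _ ≤ hSfin.toFinset.card • (⨆ T : {T : List Bool → (Fin d → ℤ) // IsProperEmbedding d L N T},
          μ (⋂ m ∈ {m : List Bool | m.length = N},
            connEvent d (box (T.1 m) L) (box (T.1 m) (2 * L))ᶜ)) := by
        refine Finset.sum_le_card_nsmul _ _ _ fun T hT => ?_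
        have hTS : T ∈ S := hSfin.mem_toFinset.mp hT
        exact le_iSup (fun T : {T : List Bool → (Fin d → ℤ) // IsProperEmbedding d L N T} =>
          μ (⋂ m ∈ {m : List Bool | m.length = N},
            connEvent d (box (T.1 m) L) (box (T.1 m) (2 * L))ᶜ)) ⟨T, hTS.1⟩
    _ ≤ ((25 ^ (2 * d) : ℕ) : ENNReal) ^ 2 ^ N *
        (⨆ T : {T : List Bool → (Fin d → ℤ) // IsProperEmbedding d L N T},
          μ (⋂ m ∈ {m : List Bool | m.length = N},
            connEvent d (box (T.1 m) L) (box (T.1 m) (2 * L))ᶜ)) := by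
        rw [nsmul_eq_mul]
        refine mul_le_mul_left ?_ _
        have hc : hSfin.toFinset.card = S.ncard := (Set.ncard_eq_toFinset_card _ hSfin).symm
        rw [hc]
        calc ((S.ncard : ℕ) : ENNReal) ≤ (((25 ^ (2 * d)) ^ 2 ^ N : ℕ) : ENNReal) :=
              Nat.cast_le.mpr hcard3
          _ = ((25 ^ (2 * d) : ℕ) : ENNReal) ^ 2 ^ N := by push_cast; ring
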